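/- Let u = (u₁,u₂), v = (v₁,v₂) be linearly independent unit vectors in ℝ² and let f = (f₁, f₂) be a vector field on ℝ² with f₁, f₂ ∈ C²_c(ℝ²). Then for every x ∈ ℝ², X_u f₁(x) - X_v f₁(x) = -∂(J f)/∂x₂ (x) - u₁ · X¹_u(div f)(x) + v₁ · X¹_v(div f)(x). -/

import Mathlib

open MeasureTheory Matrix

noncomputable section

/-- Dot product on ℝ². -/
def dot2 (u v : ℝ × ℝ) : ℝ := u.1 * v.1 + u.2 * v.2

/-- `x^⊥ = (-x₂, x₁)`. -/
def perp2 (x : ℝ × ℝ) : ℝ × ℝ := (-x.2, x.1)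

/-- Divergent beam transform `X_u h (x) = ∫₀^∞ h(x + t u) dt`. -/
def Xbeam (u : ℝ × ℝ) (h : ℝ × ℝ → ℝ) (x : ℝ × ℝ) : ℝ :=
  ∫ t in Set.Ioi (0 : ℝ), h (x + t • u)

/-- First moment divergent beam transform `X¹_u h (x) = ∫₀^∞ t h(x + t u) dt`. -/
def Xmom (u : ℝ × ℝ) (h : ℝ × ℝ → ℝ) (x : ℝ × ℝ) : ℝ :=
  ∫ t in Set.Ioi (0 : ℝ), t * h (x + t • u)

/-- Directional derivative `D_u h = u · ∇ h`. -/
def Ddir (u : ℝ × ℝ) (h : ℝ × ℝ → ℝ) (x : ℝ × ℝ) : ℝ := fderiv ℝ h x u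

/-- Twice continuously differentiable, compactly supported. -/
def IsC2c (h : ℝ × ℝ → ℝ) : Prop := ContDiff ℝ 2 h ∧ HasCompactSupport h

/-- `div f = ∂f₁/∂x₁ + ∂f₂/∂x₂`. -/
def divf (f₁ f₂ : ℝ × ℝ → ℝ) (x : ℝ × ℝ) : ℝ :=
  fderiv ℝ f₁ x (1, 0) + fderiv ℝ f₂ x (0, 1)

/-- `curl f = ∂f₂/∂x₁ - ∂f₁/∂x₂`. -/
def curlf (f₁ f₂ : ℝ × ℝ → ℝ) (x : ℝ × ℝ) : ℝ :=
  fderiv ℝ f₂ x (1, 0) - fderiv ℝ f₁ x (0, 1)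

/-- Longitudinal V-line transform `L f = -X_u (f·u) + X_v (f·v)`. -/
def VlineL (u v : ℝ × ℝ) (f₁ f₂ : ℝ × ℝ → ℝ) (x : ℝ × ℝ) : ℝ :=
  - Xbeam u (fun y => f₁ y * u.1 + f₂ y * u.2) x
  + Xbeam v (fun y => f₁ y * v.1 + f₂ y * v.2) x

/-- Transverse V-line transform `T f = -X_u (f·u^⊥) + X_v (f·v^⊥)`. -/
def VlineT (u v : ℝ × ℝ) (f₁ f₂ : ℝ × ℝ → ℝ) (x : ℝ × ℝ) : ℝ :=
  - Xbeam u (fun y => f₁ y * (perp2 u).1 + f₂ y * (perp2 u).2) x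
  + Xbeam v (fun y => f₁ y * (perp2 v).1 + f₂ y * (perp2 v).2) x

/-- First moment longitudinal V-line transform `I f = -X¹_u (f·u) + X¹_v (f·v)`. -/
def VmomL (u v : ℝ × ℝ) (f₁ f₂ : ℝ × ℝ → ℝ) (x : ℝ × ℝ) : ℝ :=
  - Xmom u (fun y => f₁ y * u.1 + f₂ y * u.2) x
  + Xmom v (fun y => f₁ y * v.1 + f₂ y * v.2) x

/-- First moment transverse V-line transform `J f = -X¹_u (f·u^⊥) + X¹_v (f·v^⊥)`. -/
def VmomT (u v : ℝ × ℝ) (f₁ f₂ : ℝ × ℝ → ℝ) (x : ℝ × ℝ) : ℝ :=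
  - Xmom u (fun y => f₁ y * (perp2 u).1 + f₂ y * (perp2 u).2) x
  + Xmom v (fun y => f₁ y * (perp2 v).1 + f₂ y * (perp2 v).2) x

/-- Radon transform `R h (ψ, s) = ∫_ℝ h (s ψ + t ψ^⊥) dt`. -/
def Radon2 (h : ℝ × ℝ → ℝ) (ψ : ℝ × ℝ) (s : ℝ) : ℝ :=
  ∫ t : ℝ, h (s • ψ + t • perp2 ψ)

/-- The (vector-valued) star transform. -/
def starS (m : ℕ) (γ : Fin m → ℝ × ℝ) (c : Fin m → ℝ)
    (f₁ f₂ : ℝ × ℝ → ℝ) (x : ℝ × ℝ) : ℝ × ℝ :=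
  ∑ i, c i •
    (Xbeam (γ i) (fun y => f₁ y * (γ i).1 + f₂ y * (γ i).2) x,
     Xbeam (γ i) (fun y => f₁ y * (perp2 (γ i)).1 + f₂ y * (perp2 (γ i)).2) x)

/-- `γ(ψ) = -∑ cᵢ γᵢ / (ψ·γᵢ)`. -/
def starGamma (m : ℕ) (γ : Fin m → ℝ × ℝ) (c : Fin m → ℝ) (ψ : ℝ × ℝ) : ℝ × ℝ :=
  - ∑ i, (c i / dot2 ψ (γ i)) • γ i

/-- A star configuration is symmetric if `m = 2k` and, after re-indexing by a
permutation, `γᵢ = -γ_{k+i}` and `cᵢ = -c_{k+i}` for `i = 1, …, k`. -/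
def StarSymmetric (m : ℕ) (γ : Fin m → ℝ × ℝ) (c : Fin m → ℝ) : Prop :=
  ∃ k : ℕ, ∃ hk : m = 2 * k, ∃ σ : Equiv.Perm (Fin m),
    ∀ i : Fin m, ∀ hi : (i : ℕ) < k,
      γ (σ i) = - γ (σ ⟨(i : ℕ) + k, by omega⟩) ∧
      c (σ i) = - c (σ ⟨(i : ℕ) + k, by omega⟩)

/-!
Differentiating under the integral sign, `∂₂ X¹_u (f·u^⊥) = X¹_u (∂₂ (f·u^⊥))`, and pointwise
`∂₂ (f·u^⊥) - u₁ div f = -D_u f₁`. Along the ray, `t · D_u f₁ (x + t u) = t · d/dt f₁ (x + t u)`,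
so integrating by parts gives `X¹_u (D_u f₁) = -X_u f₁`. Hence
`∂₂ X¹_u (f·u^⊥) - u₁ X¹_u (div f) = X_u f₁` for every nonzero `u`, and the theorem is the
difference of this identity for `v` and for `u`.
-/

open Set Filter
open scoped Pointwise

section Ray

variable {E : Type*} [NormedAddCommGroup E] [NormedSpace ℝ E]

theorem HasCompactSupport.comp_add_smul {F : Type*} [Zero F] {g : E → F}
    (hg : HasCompactSupport g) {u : E} (hu : u ≠ 0) (x : E) :
    HasCompactSupport fun t : ℝ => g (x + t • u) :=
  hg.comp_isClosedEmbedding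
    ((Homeomorph.addLeft x).isClosedEmbedding.comp (isClosedEmbedding_smul_left hu))

theorem integrable_smul_comp_add_smul {F : Type*} [NormedAddCommGroup F] [NormedSpace ℝ F]
    {k : ℝ → ℝ} (hk : Continuous k) {g : E → F} (hg : Continuous g) (hgs : HasCompactSupport g)
    {u : E} (hu : u ≠ 0) (x : E) :
    Integrable fun t => k t • g (x + t • u) :=
  (hk.smul (hg.comp (by fun_prop))).integrable_of_hasCompactSupport
    (hgs.comp_add_smul hu x).smul_left

theorem hasFDerivAt_integral_Ioi_mul_comp_add_smul [ProperSpace E] {g : E → ℝ}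
    (hg : ContDiff ℝ 1 g) (hgs : HasCompactSupport g) {u : E} (hu : u ≠ 0) (x₀ : E) :
    HasFDerivAt (fun x => ∫ t in Ioi (0:ℝ), t * g (x + t • u))
      (∫ t in Ioi (0:ℝ), t • fderiv ℝ g (x₀ + t • u)) x₀ := by
  obtain ⟨C, hC⟩ := (hg.continuous_fderiv one_ne_zero).bounded_above_of_compact_support
    (hgs.fderiv ℝ)
  -- `S` contains every `t` with `x + t • u ∈ tsupport (fderiv ℝ g)` for some `x ∈ ball x₀ 1`
  set S := (fun t : ℝ => x₀ + t • u) ⁻¹' (tsupport (fderiv ℝ g) + Metric.closedBall (0:E) 1)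
  have hS : IsCompact S :=
    ((Homeomorph.addLeft x₀).isClosedEmbedding.comp
      (isClosedEmbedding_smul_left hu)).isCompact_preimage
        ((hgs.fderiv ℝ).isCompact.add (isCompact_closedBall (0:E) 1))
  refine hasFDerivAt_integral_of_dominated_of_fderiv_le (𝕜 := ℝ) (μ := volume.restrict (Ioi 0))
    (F := fun x t => t * g (x + t • u)) (F' := fun x t => t • fderiv ℝ g (x + t • u))
    (Metric.ball_mem_nhds x₀ one_pos)
    (bound := S.indicator fun t => ‖t‖ * C) ?_ ?_ ?_ ?_ ?_ ?_
  · exact Eventually.of_forall fun x =>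
      (continuous_id.mul (hg.continuous.comp (by fun_prop))).aestronglyMeasurable
  · exact (integrable_smul_comp_add_smul continuous_id' hg.continuous hgs hu x₀).integrableOn
  · exact (continuous_id.smul ((hg.continuous_fderiv one_ne_zero).comp
      (by fun_prop))).aestronglyMeasurable
  · refine Eventually.of_forall fun t x hx => ?_
    by_cases hxt : x + t • u ∈ tsupport (fderiv ℝ g)
    · have htS : t ∈ S := ⟨x + t • u, hxt, x₀ - x,
        by simpa [dist_eq_norm, norm_sub_rev] using (Metric.mem_ball.mp hx).le, by dsimp only; abel⟩
      rw [indicator_of_mem htS, norm_smul]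
      exact mul_le_mul_of_nonneg_left (hC _) (norm_nonneg t)
    · rw [image_eq_zero_of_notMem_tsupport hxt, smul_zero, norm_zero]
      exact indicator_nonneg (fun t _ => mul_nonneg (norm_nonneg t)
        ((norm_nonneg _).trans (hC 0))) t
  · exact ((integrable_indicator_iff hS.measurableSet).mpr
      ((continuous_norm.mul continuous_const).continuousOn.integrableOn_compact hS)).restrict
  · refine Eventually.of_forall fun t x _ => ?_
    have hshift : HasFDerivAt (fun x => x + t • u) (ContinuousLinearMap.id ℝ E) x :=
      (hasFDerivAt_id x).add_const _
    simpa using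
      (((hg.differentiable one_ne_zero) (x + t • u)).hasFDerivAt.comp x hshift).const_mul t

theorem integral_Ioi_mul_fderiv_comp_add_smul {f : E → ℝ} (hf : ContDiff ℝ 1 f)
    (hfs : HasCompactSupport f) {u : E} (hu : u ≠ 0) (x : E) :
    ∫ t in Ioi (0:ℝ), t * fderiv ℝ f (x + t • u) u = -∫ t in Ioi (0:ℝ), f (x + t • u) := by
  have hline : ContDiff ℝ 1 fun t : ℝ => x + t • u := by fun_prop
  have hderiv : ∀ t : ℝ, deriv (fun t => t * f (x + t • u)) t
      = f (x + t • u) + t * fderiv ℝ f (x + t • u) u := fun t => by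
    have hφ : HasDerivAt (fun t : ℝ => f (x + t • u)) (fderiv ℝ f (x + t • u) u) t := by
      have := ((hasDerivAt_id t).smul_const u).const_add x
      simp only [id, one_smul] at this
      exact (hf.differentiable one_ne_zero _).hasFDerivAt.comp_hasDerivAt t this
    exact ((hasDerivAt_id' t).fun_mul hφ).deriv.trans (by simp)
  have hFTC := HasCompactSupport.integral_Ioi_deriv_eq
    (show ContDiff ℝ 1 fun t : ℝ => t * f (x + t • u) from contDiff_id.mul (hf.comp hline))
    (hfs.comp_add_smul hu x).mul_left 0
  simp only [hderiv, zero_mul, neg_zero] at hFTC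
  have hint₁ : IntegrableOn (fun t => f (x + t • u)) (Ioi (0:ℝ)) := by
    simpa only [one_smul] using (integrable_smul_comp_add_smul (k := fun _ => 1)
      continuous_const hf.continuous hfs hu x).integrableOn
  have hint₂ : IntegrableOn (fun t => t * fderiv ℝ f (x + t • u) u) (Ioi 0) :=
    (integrable_smul_comp_add_smul continuous_id'
      ((hf.continuous_fderiv one_ne_zero).clm_apply continuous_const)
      (hfs.fderiv_apply ℝ u) hu x).integrableOn
  rw [integral_add hint₁ hint₂] at hFTC
  linarith

end Ray

section Beam

variable {u : ℝ × ℝ}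

theorem Xmom_sub {h₁ h₂ : ℝ × ℝ → ℝ} (hc₁ : Continuous h₁) (hs₁ : HasCompactSupport h₁)
    (hc₂ : Continuous h₂) (hs₂ : HasCompactSupport h₂) (hu : u ≠ 0) (x : ℝ × ℝ) :
    Xmom u (fun y => h₁ y - h₂ y) x = Xmom u h₁ x - Xmom u h₂ x := by
  simp only [Xmom, mul_sub]
  exact integral_sub (integrable_smul_comp_add_smul continuous_id' hc₁ hs₁ hu x).integrableOn
    (integrable_smul_comp_add_smul continuous_id' hc₂ hs₂ hu x).integrableOn

theorem Xmom_const_mul (c : ℝ) (h : ℝ × ℝ → ℝ) (x : ℝ × ℝ) :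
    Xmom u (fun y => c * h y) x = c * Xmom u h x := by
  simp only [Xmom, mul_left_comm _ c, integral_const_mul]

theorem hasFDerivAt_Xmom {g : ℝ × ℝ → ℝ} (hg : ContDiff ℝ 1 g) (hgs : HasCompactSupport g)
    (hu : u ≠ 0) (x : ℝ × ℝ) :
    HasFDerivAt (Xmom u g) (∫ t in Ioi (0:ℝ), t • fderiv ℝ g (x + t • u)) x :=
  hasFDerivAt_integral_Ioi_mul_comp_add_smul hg hgs hu x

theorem fderiv_Xmom_apply {g : ℝ × ℝ → ℝ} (hg : ContDiff ℝ 1 g) (hgs : HasCompactSupport g)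
    (hu : u ≠ 0) (x w : ℝ × ℝ) :
    fderiv ℝ (Xmom u g) x w = Xmom u (fun y => fderiv ℝ g y w) x := by
  rw [(hasFDerivAt_Xmom hg hgs hu x).fderiv, ContinuousLinearMap.integral_apply
    (integrable_smul_comp_add_smul continuous_id' (hg.continuous_fderiv one_ne_zero)
      (hgs.fderiv ℝ) hu x).integrableOn]
  rfl

theorem Xmom_Ddir {f : ℝ × ℝ → ℝ} (hf : ContDiff ℝ 1 f) (hfs : HasCompactSupport f)
    (hu : u ≠ 0) (x : ℝ × ℝ) : Xmom u (Ddir u f) x = -Xbeam u f x :=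
  integral_Ioi_mul_fderiv_comp_add_smul hf hfs hu x

end Beam

theorem ContinuousLinearMap.apply_eq_fst_mul_add_snd_mul (L : ℝ × ℝ →L[ℝ] ℝ) (w : ℝ × ℝ) :
    L w = w.1 * L (1, 0) + w.2 * L (0, 1) := by
  conv_lhs => rw [show w = w.1 • ((1:ℝ), (0:ℝ)) + w.2 • ((0:ℝ), (1:ℝ)) by ext <;> simp]
  rw [map_add, map_smul, map_smul, smul_eq_mul, smul_eq_mul]

theorem fderiv_dot_perp_apply_snd (u : ℝ × ℝ) {f₁ f₂ : ℝ × ℝ → ℝ} {y : ℝ × ℝ}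
    (h₁ : DifferentiableAt ℝ f₁ y) (h₂ : DifferentiableAt ℝ f₂ y) :
    fderiv ℝ (fun y => f₁ y * (perp2 u).1 + f₂ y * (perp2 u).2) y (0, 1)
      = u.1 * divf f₁ f₂ y - Ddir u f₁ y := by
  rw [fderiv_fun_add (h₁.mul_const _) (h₂.mul_const _), fderiv_mul_const h₁, fderiv_mul_const h₂,
    Ddir, (fderiv ℝ f₁ y).apply_eq_fst_mul_add_snd_mul u]
  simp only [divf, perp2, _root_.add_apply, _root_.smul_apply, smul_eq_mul]
  ring

theorem HasCompactSupport.mul_const_add_mul_const {f₁ f₂ : ℝ × ℝ → ℝ} (hf₁s : HasCompactSupport f₁)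
    (hf₂s : HasCompactSupport f₂) (a b : ℝ) : HasCompactSupport fun y => f₁ y * a + f₂ y * b :=
  hf₁s.mul_right.add hf₂s.mul_right

theorem fderiv_Xmom_dot_perp_apply_snd_sub {u : ℝ × ℝ} (hu : u ≠ 0) {f₁ f₂ : ℝ × ℝ → ℝ}
    (hf₁ : ContDiff ℝ 1 f₁) (hf₁s : HasCompactSupport f₁)
    (hf₂ : ContDiff ℝ 1 f₂) (hf₂s : HasCompactSupport f₂) (x : ℝ × ℝ) :
    fderiv ℝ (Xmom u fun y => f₁ y * (perp2 u).1 + f₂ y * (perp2 u).2) x (0, 1)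
      - u.1 * Xmom u (divf f₁ f₂) x = Xbeam u f₁ x := by
  have hD : ∀ {f : ℝ × ℝ → ℝ}, ContDiff ℝ 1 f → ∀ w, Continuous fun y => fderiv ℝ f y w :=
    fun hf w => (hf.continuous_fderiv one_ne_zero).clm_apply continuous_const
  have hdiv : Continuous (fun y => u.1 * divf f₁ f₂ y) :=
    continuous_const.mul ((hD hf₁ _).add (hD hf₂ _))
  have hdivs : HasCompactSupport (fun y => u.1 * divf f₁ f₂ y) :=
    ((hf₁s.fderiv_apply ℝ _).add (hf₂s.fderiv_apply ℝ _)).mul_left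
  have hdu : ∀ y, fderiv ℝ (fun y => f₁ y * (perp2 u).1 + f₂ y * (perp2 u).2) y (0, 1)
      = u.1 * divf f₁ f₂ y - Ddir u f₁ y := fun y =>
    fderiv_dot_perp_apply_snd u (hf₁.differentiable one_ne_zero y)
      (hf₂.differentiable one_ne_zero y)
  rw [fderiv_Xmom_apply (by fun_prop) (hf₁s.mul_const_add_mul_const hf₂s _ _) hu, funext hdu,
    Xmom_sub (h₂ := Ddir u f₁) hdiv hdivs (hD hf₁ u) (hf₁s.fderiv_apply ℝ u) hu, Xmom_const_mul,
    Xmom_Ddir hf₁ hf₁s hu]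
  ring

theorem stmt12_general (u v : ℝ × ℝ) (hu : u.1 ^ 2 + u.2 ^ 2 = 1) (hv : v.1 ^ 2 + v.2 ^ 2 = 1)
    (f₁ f₂ : ℝ × ℝ → ℝ) (hf₁ : IsC2c f₁) (hf₂ : IsC2c f₂) (x : ℝ × ℝ) :
    Xbeam u f₁ x - Xbeam v f₁ x
      = -fderiv ℝ (VmomT u v f₁ f₂) x (0, 1)
        - u.1 * Xmom u (divf f₁ f₂) x + v.1 * Xmom v (divf f₁ f₂) x := by
  have hu0 : u ≠ 0 := by rintro rfl; norm_num at hu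
  have hv0 : v ≠ 0 := by rintro rfl; norm_num at hv
  obtain ⟨hf₁, hf₁s⟩ := hf₁
  obtain ⟨hf₂, hf₂s⟩ := hf₂
  replace hf₁ := hf₁.of_le one_le_two
  replace hf₂ := hf₂.of_le one_le_two
  have hXmom : ∀ w : ℝ × ℝ, w ≠ 0 →
      DifferentiableAt ℝ (Xmom w fun y => f₁ y * (perp2 w).1 + f₂ y * (perp2 w).2) x :=
    fun w hw => (hasFDerivAt_Xmom (by fun_prop) (hf₁s.mul_const_add_mul_const hf₂s _ _) hw x)
      |>.differentiableAt
  have hJ : fderiv ℝ (VmomT u v f₁ f₂) x (0, 1)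
      = -fderiv ℝ (Xmom u fun y => f₁ y * (perp2 u).1 + f₂ y * (perp2 u).2) x (0, 1)
        + fderiv ℝ (Xmom v fun y => f₁ y * (perp2 v).1 + f₂ y * (perp2 v).2) x (0, 1) := by
    unfold VmomT
    rw [fderiv_fun_add (hXmom u hu0).fun_neg (hXmom v hv0), fderiv_fun_neg]
    rfl
  linarith [fderiv_Xmom_dot_perp_apply_snd_sub hu0 hf₁ hf₁s hf₂ hf₂s x,
    fderiv_Xmom_dot_perp_apply_snd_sub hv0 hf₁ hf₁s hf₂ hf₂s x]

/-- `X_u f₁ - X_v f₁ = -∂(J f)/∂x₂ - u₁ X¹_u(div f) + v₁ X¹_v(div f)`. -/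
theorem stmt12 (u v : ℝ × ℝ) (hu : u.1 ^ 2 + u.2 ^ 2 = 1) (hv : v.1 ^ 2 + v.2 ^ 2 = 1)
    (huv : LinearIndependent ℝ ![u, v])
    (f₁ f₂ : ℝ × ℝ → ℝ) (hf₁ : IsC2c f₁) (hf₂ : IsC2c f₂) (x : ℝ × ℝ) :
    Xbeam u f₁ x - Xbeam v f₁ x
      = -fderiv ℝ (VmomT u v f₁ f₂) x (0, 1)
        - u.1 * Xmom u (divf f₁ f₂) x + v.1 * Xmom v (divf f₁ f₂) x :=
  stmt12_general u v hu hv f₁ f₂ hf₁ hf₂ x
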